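/- Let A be a unital algebra over ℂ, M a unital A-bimodule, and m, n positive integers with m ≠ n. If δ : A → M is an (m,n)-Jordan derivable mapping at zero with δ(1) = 0, then for every A ∈ A and every element S of the subalgebra generated by the idempotents of A, δ(SA) = δ(AS) = δ(A)·S = S·δ(A). -/

import Mathlib

/-!
For an idempotent `P` with `Q = 1 - P`, the zero-product identity applied to `X = P`, `Y = Q`
says `2m·δP·u + 2n·u·δP = 0` for the involution `u = Q - P`; multiplying by `u` on either
side gives `m²·δP = n²·δP`, so `δ P = 0` as `m ≠ n`. Since `P + P a Q` is idempotent too, `δ`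
kills the off-diagonal Peirce corners `P a Q` and `Q a P`, and applying the identity to the pairs
`(Q, P a P)` and `(P, Q a Q)` puts `δ(P a P)` in the corner `P M P` and `δ(Q a Q)` in `Q M Q`.
Hence `δ(P a) = δ(a P) = P·δ a = δ a·P = δ(P a P)`. These identities are preserved by sums,
negatives and products, so they hold on the whole subring generated by the idempotents.
-/

open MulOpposite

theorem IsIdempotentElem.add_mul_mul_one_sub {A : Type*} [Ring A] {P : A}
    (hP : IsIdempotentElem P) (b : A) : IsIdempotentElem (P + P * b * (1 - P)) := by
  simp only [IsIdempotentElem, mul_add, add_mul, mul_assoc, hP.one_sub_mul_self, mul_zero,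
    ← mul_assoc P P, hP.eq, ← mul_assoc (1 - P) P, zero_mul, add_zero]

section

variable {A M : Type*} [Ring A] [AddCommGroup M] [Module A M] [Module Aᵐᵒᵖ M]

/-- The right action of `A` on `M` is the action of `Aᵐᵒᵖ`: `op Y • δ X` stands for `δ(X)·Y`. -/
def IsJordanDerivableAtZero (m n : ℕ) (δ : A →+ M) : Prop :=
  ∀ X Y : A, X * Y = 0 → Y * X = 0 →
    (m + n) • δ (X * Y + Y * X) =
      (2 * m) • (op Y • δ X) + (2 * m) • (op X • δ Y)
        + (2 * n) • (X • δ Y) + (2 * n) • (Y • δ X)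

theorem IsJordanDerivableAtZero.sum_eq_zero {m n : ℕ} {δ : A →+ M}
    (hδ : IsJordanDerivableAtZero m n δ) {X Y : A} (hXY : X * Y = 0) (hYX : Y * X = 0) :
    (2 * m) • (op Y • δ X) + (2 * m) • (op X • δ Y) + (2 * n) • (X • δ Y)
      + (2 * n) • (Y • δ X) = 0 := by
  simpa [hXY, hYX] using (hδ X Y hXY hYX).symm

variable [SMulCommClass A Aᵐᵒᵖ M]

def AddMonoidHom.commutingSubring (δ : A →+ M) : Subring A where
  carrier := {s | ∀ a, δ (s * a) = s • δ a ∧ δ (a * s) = MulOpposite.op s • δ a ∧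
    MulOpposite.op s • δ a = s • δ a}
  one_mem' := by simp
  zero_mem' := by simp
  add_mem' := by
    intro x y hx hy a
    obtain ⟨hx₁, hx₂, hx₃⟩ := hx a
    obtain ⟨hy₁, hy₂, hy₃⟩ := hy a
    simp only [add_mul, mul_add, map_add, MulOpposite.op_add, add_smul, hx₁, hx₂, hx₃, hy₁,
      hy₂, hy₃, and_self]
  neg_mem' := by
    intro x hx a
    obtain ⟨hx₁, hx₂, hx₃⟩ := hx a
    simp only [neg_mul, mul_neg, map_neg, MulOpposite.op_neg, neg_smul, hx₁, hx₂, hx₃,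
      and_self]
  mul_mem' := by
    intro x y hx hy a
    refine ⟨?_, ?_, ?_⟩
    · rw [mul_assoc, (hx _).1, (hy _).1, mul_smul]
    · rw [← mul_assoc, (hy _).2.1, (hx _).2.1, MulOpposite.op_mul, mul_smul]
    · rw [MulOpposite.op_mul, mul_smul, (hx a).2.2, ← smul_comm x (MulOpposite.op y), (hy a).2.2,
        mul_smul]

variable [IsAddTorsionFree M]

theorem eq_zero_of_nsmul_op_smul_add_nsmul_smul_eq_zero {u : A} (hu : u * u = 1) {p q : ℕ}
    (hpq : p ≠ q) {x : M} (h : p • (op u • x) + q • (u • x) = 0) : x = 0 := by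
  have hl : p • (u • op u • x) + q • x = 0 := by
    simpa [smul_add, smul_comm u p, smul_comm u q, ← mul_smul, hu] using congrArg (u • ·) h
  have hr : p • x + q • (u • op u • x) = 0 := by
    simpa [smul_add, smul_comm (op u) p, smul_comm (op u) q, ← mul_smul, ← op_mul, hu,
      smul_comm u (op u)] using congrArg (op u • ·) h
  generalize u • op u • x = y at hl hr
  have : (p * p - q * q : ℤ) • x = 0 := by
    linear_combination (norm := module) (p : ℤ) • hr - (q : ℤ) • hl
  refine (smul_eq_zero_iff_right ?_).1 this
  rw [sub_ne_zero]
  exact_mod_cast Nat.mul_self_inj.not.2 hpq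

theorem IsIdempotentElem.smul_eq_zero_of_nsmul_op_smul_add_nsmul_smul_eq_zero {e : A}
    (he : IsIdempotentElem e) {p q : ℕ} (hp : 0 < p) (hq : 0 < q) {x : M}
    (h : p • (op e • x) + q • (e • x) = 0) : e • x = 0 ∧ op e • x = 0 := by
  have hl : p • (e • op e • x) + q • (e • x) = 0 := by
    simpa [smul_add, smul_comm e p, smul_comm e q, ← mul_smul, he.eq] using congrArg (e • ·) h
  have hr : p • (op e • x) + q • (e • op e • x) = 0 := by
    simpa [smul_add, smul_comm (op e) p, smul_comm (op e) q, ← mul_smul, ← op_mul, he.eq,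
      smul_comm e (op e)] using congrArg (op e • ·) h
  have hc : (p + q) • (e • op e • x) = 0 := by
    simpa [smul_add, smul_comm e p, smul_comm e q, ← mul_smul, he.eq, add_smul]
      using congrArg (e • ·) hr
  have hc := (nsmul_eq_zero_iff_right (by omega)).1 hc
  simp only [hc, smul_zero, zero_add, add_zero] at hl hr
  exact ⟨(nsmul_eq_zero_iff_right hq.ne').1 hl, (nsmul_eq_zero_iff_right hp.ne').1 hr⟩

namespace IsJordanDerivableAtZero

variable {m n : ℕ} {δ : A →+ M} (hδ : IsJordanDerivableAtZero m n δ)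
include hδ

theorem map_eq_zero_of_isIdempotentElem (hmn : m ≠ n) (h1 : δ 1 = 0) {P : A}
    (hP : IsIdempotentElem P) : δ P = 0 := by
  have hu : (1 - P - P) * (1 - P - P) = 1 := by
    simp only [sub_mul, mul_sub, one_mul, mul_one, hP.eq]; abel
  refine eq_zero_of_nsmul_op_smul_add_nsmul_smul_eq_zero hu (p := 2 * m) (q := 2 * n)
    (by omega) ?_
  rw [← hδ.sum_eq_zero hP.mul_one_sub_self hP.one_sub_mul_self, map_sub, h1, zero_sub]
  simp only [op_sub, sub_smul, smul_sub, smul_neg]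
  abel

theorem map_mul_mul_one_sub (hmn : m ≠ n) (h1 : δ 1 = 0) {P : A} (hP : IsIdempotentElem P)
    (b : A) : δ (P * b * (1 - P)) = 0 := by
  have := hδ.map_eq_zero_of_isIdempotentElem hmn h1 (hP.add_mul_mul_one_sub b)
  rwa [map_add, hδ.map_eq_zero_of_isIdempotentElem hmn h1 hP, zero_add] at this

theorem smul_map_eq_zero (hm : 0 < m) (hn : 0 < n) {P : A} (hP : IsIdempotentElem P)
    (hdP : δ P = 0) {Y : A} (hPY : P * Y = 0) (hYP : Y * P = 0) :
    P • δ Y = 0 ∧ op P • δ Y = 0 :=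
  hP.smul_eq_zero_of_nsmul_op_smul_add_nsmul_smul_eq_zero (p := 2 * m) (q := 2 * n) (by omega)
    (by omega) (by simpa [hdP] using hδ.sum_eq_zero hPY hYP)

theorem mem_commutingSubring (hm : 0 < m) (hn : 0 < n) (hmn : m ≠ n) (h1 : δ 1 = 0) {P : A}
    (hP : IsIdempotentElem P) : P ∈ δ.commutingSubring := by
  intro a
  have hdP : δ P = 0 := hδ.map_eq_zero_of_isIdempotentElem hmn h1 hP
  have hdQ : δ (1 - P) = 0 := by rw [map_sub, h1, hdP, sub_zero]
  have hPaQ : δ (P * a * (1 - P)) = 0 := hδ.map_mul_mul_one_sub hmn h1 hP a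
  have hQaP : δ ((1 - P) * a * P) = 0 := by
    simpa using hδ.map_mul_mul_one_sub hmn h1 hP.one_sub a
  obtain ⟨hw, hw'⟩ := hδ.smul_map_eq_zero hm hn hP.one_sub hdQ (Y := P * a * P)
    (by simp [← mul_assoc, hP.one_sub_mul_self]) (by simp [mul_assoc, hP.mul_one_sub_self])
  obtain ⟨hv, hv'⟩ := hδ.smul_map_eq_zero hm hn hP hdP (Y := (1 - P) * a * (1 - P))
    (by simp [← mul_assoc, hP.mul_one_sub_self]) (by simp [mul_assoc, hP.one_sub_mul_self])
  rw [sub_smul, one_smul, sub_eq_zero] at hw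
  rw [op_sub, op_one, sub_smul, one_smul, sub_eq_zero] at hw'
  have hPa : P * a = P * a * P + P * a * (1 - P) := by noncomm_ring
  have haP : a * P = P * a * P + (1 - P) * a * P := by noncomm_ring
  have ha : a = P * a * P + P * a * (1 - P) + (1 - P) * a * P + (1 - P) * a * (1 - P) := by
    noncomm_ring
  have hda : δ a = δ (P * a * P) + δ ((1 - P) * a * (1 - P)) := by
    conv_lhs => rw [ha]
    simp only [map_add, hPaQ, hQaP, add_zero]
  refine ⟨?_, ?_, ?_⟩
  · rw [hPa, hda, map_add, hPaQ, smul_add, hv, ← hw, add_zero]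
  · rw [haP, hda, map_add, hQaP, smul_add, hv', ← hw', add_zero]
  · rw [hda, smul_add, smul_add, hv, hv', ← hw, ← hw']

end IsJordanDerivableAtZero

end

theorem mn_jordan_derivable_at_zero_idempotent_subring_general
    {A M : Type*} [Ring A]
    [AddCommGroup M] [Module ℂ M] [Module A M] [Module Aᵐᵒᵖ M]
    [SMulCommClass A Aᵐᵒᵖ M]
    (m n : ℕ) (hm : 0 < m) (hn : 0 < n) (hmn : m ≠ n)
    (δ : A → M) (hadd : ∀ a b : A, δ (a + b) = δ a + δ b)
    (hδ1 : δ 1 = 0)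
    (hzero : ∀ X Y : A, X * Y = 0 → Y * X = 0 →
      (m + n) • δ (X * Y + Y * X) =
        (2 * m) • (op Y • δ X) + (2 * m) • (op X • δ Y)
          + (2 * n) • (X • δ Y) + (2 * n) • (Y • δ X))
    (S : A) (hS : S ∈ Subring.closure {P : A | P * P = P}) (a : A) :
    δ (S * a) = δ (a * S) ∧ δ (a * S) = op S • δ a ∧ op S • δ a = S • δ a := by
  have : IsAddTorsionFree M := .of_isTorsionFree ℂ M
  let δ' : A →+ M := AddMonoidHom.mk' δ hadd
  have hδ' : IsJordanDerivableAtZero m n δ' := hzero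
  have hS' : S ∈ δ'.commutingSubring :=
    Subring.closure_le.2 (fun P hP => hδ'.mem_commutingSubring hm hn hmn hδ1 hP) hS
  obtain ⟨hSa, haS, hcomm⟩ := hS' a
  exact ⟨hSa.trans (haS.trans hcomm).symm, haS, hcomm⟩

/-- The commuting property extends from idempotents to the
subring generated by all idempotents of `A`. -/
theorem mn_jordan_derivable_at_zero_idempotent_subring
    {A M : Type*} [Ring A] [Algebra ℂ A]
    [AddCommGroup M] [Module ℂ M] [Module A M] [Module Aᵐᵒᵖ M]
    [SMulCommClass A Aᵐᵒᵖ M]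
    (m n : ℕ) (hm : 0 < m) (hn : 0 < n) (hmn : m ≠ n)
    (δ : A → M) (hadd : ∀ a b : A, δ (a + b) = δ a + δ b)
    (hδ1 : δ 1 = 0)
    (hzero : ∀ X Y : A, X * Y = 0 → Y * X = 0 →
      (m + n) • δ (X * Y + Y * X) =
        (2 * m) • (op Y • δ X) + (2 * m) • (op X • δ Y)
          + (2 * n) • (X • δ Y) + (2 * n) • (Y • δ X))
    (S : A) (hS : S ∈ Subring.closure {P : A | P * P = P}) (a : A) :
    δ (S * a) = δ (a * S) ∧ δ (a * S) = op S • δ a ∧ op S • δ a = S • δ a :=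
  mn_jordan_derivable_at_zero_idempotent_subring_general m n hm hn hmn δ hadd hδ1 hzero S hS a
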